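/- arXiv:1910.05465 — 10 statements merged into one kernel-verified Lean document; each statement's English description precedes it below -/
import Mathlib

section
/- Every oriented bipartite graph (a digraph obtained by assigning a direction to each edge of a finite bipartite undirected graph) contains an independent dominating set. -/
/-- `S` is independent in the digraph with arc relation `A`. -/
def Indep {V : Type*} (A : V → V → Prop) (S : Set V) : Prop :=
  ∀ u ∈ S, ∀ v ∈ S, ¬ A u v

/-- `S` is dominating in the digraph with arc relation `A`. -/
def Dom {V : Type*} (A : V → V → Prop) (S : Set V) : Prop :=
  ∀ v, v ∉ S → ∃ u ∈ S, A u v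

/-- `S` is an independent dominating set. -/
def IsIDS {V : Type*} (A : V → V → Prop) (S : Set V) : Prop :=
  Indep A S ∧ Dom A S

/-- A digraph is strongly connected if there is a directed path between any
ordered pair of vertices. -/
def StronglyConnected {V : Type*} (A : V → V → Prop) : Prop :=
  ∀ u v : V, Relation.ReflTransGen A u v

/-- The digraph contains a directed cycle of length `n`. -/
def HasCycleLength {V : Type*} (A : V → V → Prop) (n : ℕ) : Prop :=
  0 < n ∧ ∃ f : ZMod n → V, Function.Injective f ∧ ∀ i : ZMod n, A (f i) (f (i + 1))

/-- `h` is the period of the digraph: the greatest common divisor of the lengths of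
its directed cycles (`0` for an acyclic digraph). -/
def IsPeriod {V : Type*} (A : V → V → Prop) (h : ℕ) : Prop :=
  (∀ n, HasCycleLength A n → h ∣ n) ∧ ∀ d : ℕ, (∀ n, HasCycleLength A n → d ∣ n) → d ∣ h

/-- Closed out-neighborhood `N⁺[S]`. -/
def NplusClosed {V : Type*} (A : V → V → Prop) (S : Set V) : Set V :=
  S ∪ {v | ∃ u ∈ S, A u v}

/-- In-neighborhood `N⁻(S)`. -/
def Nminus {V : Type*} (A : V → V → Prop) (S : Set V) : Set V :=
  {u | ∃ v ∈ S, A u v}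

/-- `I` is an independent dominating set of the subdigraph induced on `W`. -/
def IsIDSOn {V : Type*} (A : V → V → Prop) (W I : Set V) : Prop :=
  I ⊆ W ∧ (∀ u ∈ I, ∀ v ∈ I, ¬ A u v) ∧ ∀ v ∈ W, v ∉ I → ∃ u ∈ I, A u v

/-- `D` is vertex minimal IDS-free. -/
def VertexMinimalIDSFree {V : Type*} (A : V → V → Prop) : Prop :=
  (¬ ∃ I : Set V, IsIDS A I) ∧
    ∀ S : Set V, S.Nonempty →
      ∃ I : Set V, IsIDSOn A (Set.univ \ NplusClosed A S) I ∧ I ∩ Nminus A S = ∅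

/-- Arc relation of the Cartesian product of two digraphs. -/
def cartArc {V W : Type*} (A : V → V → Prop) (B : W → W → Prop) :
    V × W → V × W → Prop :=
  fun p q => (A p.1 q.1 ∧ p.2 = q.2) ∨ (B p.2 q.2 ∧ p.1 = q.1)

/-- Arc relation of the directed cycle `C_n` on `ZMod n`. -/
def cycArc (n : ℕ) : ZMod n → ZMod n → Prop := fun i j => j = i + 1

/-- Arc relation of the directed wheel `W_n'`: `none` is the center, with arcs to every
cycle vertex, and the outer cycle is directed. -/
def wheelArc (n : ℕ) (u v : Option (ZMod n)) : Prop :=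
  (u = none ∧ ∃ i : ZMod n, v = some i) ∨ ∃ i : ZMod n, u = some i ∧ v = some (i + 1)

/-- Arc relation of the oriented paw `P'` on vertices `a = 0, b₁ = 1, b₂ = 2, b₃ = 3`. -/
def pawArc (u v : Fin 4) : Prop :=
  (u = 0 ∧ v = 3) ∨ (u = 1 ∧ v = 2) ∨ (u = 2 ∧ v = 3) ∨ (u = 3 ∧ v = 1)

/-- Every oriented bipartite graph contains an independent dominating set. -/
theorem stmt_2 {V : Type*} [Fintype V] (A : V → V → Prop)
    (B : V → Bool) (hbip : ∀ u v : V, A u v → B u ≠ B v)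
    (hor : ∀ u v : V, A u v → ¬ A v u) :
    ∃ S : Set V, IsIDS A S := by
  classical
  -- `Np T` is the out-neighborhood of `T`.
  set Np : Set V → Set V := fun T => {v | ∃ u ∈ T, A u v} with hNp
  -- monotone operator on subsets of the `false` part
  have hmono : Monotone (fun T : Set V =>
      {v | B v = false ∧ ∀ u, B u = true → u ∉ Np T → ¬ A u v}) := by
    intro T T' hTT v hv
    refine ⟨hv.1, fun u hu hun => hv.2 u hu ?_⟩
    intro ⟨w, hw, hA⟩
    exact hun ⟨w, hTT hw, hA⟩
  set F : Set V →o Set V :=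
    ⟨fun T => {v | B v = false ∧ ∀ u, B u = true → u ∉ Np T → ¬ A u v}, hmono⟩ with hF
  set Y₁ : Set V := OrderHom.lfp F with hY₁
  have hfix : F Y₁ = Y₁ := OrderHom.map_lfp F
  set X₁ : Set V := {u | B u = true ∧ u ∉ Np Y₁} with hX₁
  refine ⟨X₁ ∪ Y₁, ?_, ?_⟩
  · -- independence
    rintro u hu v hv hA
    have hYmem : ∀ y ∈ Y₁, B y = false ∧ ∀ w, B w = true → w ∉ Np Y₁ → ¬ A w y := by
      intro y hy; rw [← hfix] at hy; exact hy
    rcases hu with hu | hu <;> rcases hv with hv | hv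
    · exact hbip u v hA (hu.1.trans hv.1.symm)
    · exact (hYmem v hv).2 u hu.1 hu.2 hA
    · exact hv.2 ⟨u, hu, hA⟩
    · exact hbip u v hA ((hYmem u hu).1.trans (hYmem v hv).1.symm)
  · -- domination
    intro v hv
    obtain ⟨hvX, hvY⟩ := not_or.mp hv
    rcases Bool.eq_false_or_eq_true (B v) with hB | hB
    swap
    · -- v in the `false` part, not in Y₁ = F Y₁
      rw [← hfix] at hvY
      simp only [hF, OrderHom.coe_mk, Set.mem_setOf_eq, not_and, not_forall] at hvY
      obtain ⟨u, hu1, hu2, hu3⟩ := hvY hB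
      exact ⟨u, Or.inl ⟨hu1, hu2⟩, not_not.mp hu3⟩
    · -- v in the `true` part, not in X₁
      have : v ∈ Np Y₁ := by
        by_contra h
        exact hvX ⟨hB, h⟩
      obtain ⟨u, hu, hA⟩ := this
      exact ⟨u, Or.inr hu, hA⟩
end

section
/- Every strongly connected digraph with at least two vertices whose period (the greatest common divisor of the lengths of its directed cycles) is even has an independent dominating set. -/
section AuxWalk
variable {V : Type*} (A : V → V → Prop)

def GWalk (f : ℕ → V) (n : ℕ) : Prop := ∀ i < n, A (f i) (f (i+1))

lemma exists_walk {u v : V} (hrt : Relation.ReflTransGen A u v) :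
    ∃ n f, GWalk A f n ∧ f 0 = u ∧ f n = v := by
  induction hrt with
  | refl => exact ⟨0, fun _ => u, fun i hi => absurd hi (Nat.not_lt_zero i), rfl, rfl⟩
  | @tail b c hab hbc ih =>
    obtain ⟨n, f, hw, h0, hn⟩ := ih
    refine ⟨n+1, fun k => if k ≤ n then f k else c, ?_, ?_, ?_⟩
    · intro i hi
      by_cases h1 : i + 1 ≤ n
      · simp only [if_pos h1, if_pos (by omega : i ≤ n)]
        exact hw i (by omega)
      · have hieq : i = n := by omega
        simp only [hieq, if_pos le_rfl, if_neg (by omega : ¬ n + 1 ≤ n), hn]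
        exact hbc
    · simpa using h0
    · simp
end AuxWalk

lemma walk_concat {V : Type*} (A : V → V → Prop) {f g : ℕ → V} {n m : ℕ}
    (hf : GWalk A f n) (hg : GWalk A g m) (hfg : f n = g 0) :
    ∃ F, GWalk A F (n + m) ∧ F 0 = f 0 ∧ F (n + m) = g m := by
  refine ⟨fun k => if k ≤ n then f k else g (k - n), ?_, by simp, ?_⟩
  · intro i hi
    by_cases h1 : i + 1 ≤ n
    · simp only [if_pos h1, if_pos (by omega : i ≤ n)]
      exact hf i (by omega)
    · by_cases h2 : i ≤ n
      · have hieq : i = n := by omega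
        simp only [hieq, if_pos le_rfl, if_neg (by omega : ¬ n + 1 ≤ n), hfg,
          (by omega : n + 1 - n = 1)]
        exact hg 0 (by omega)
      · simp only [if_neg h2, if_neg (by omega : ¬ i + 1 ≤ n),
          (by omega : i + 1 - n = (i - n) + 1)]
        exact hg (i - n) (by omega)
  · by_cases hm : m = 0
    · subst hm; simpa using hfg
    · simp only [if_neg (by omega : ¬ n + m ≤ n)]
      congr 1; omega

lemma closed_dvd {V : Type*} (A : V → V → Prop) (h : ℕ)
    (hper : ∀ n, HasCycleLength A n → h ∣ n) :
    ∀ n f, GWalk A f n → f n = f 0 → h ∣ n := by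
  intro n
  induction n using Nat.strong_induction_on with
  | _ n ih =>
  intro f hw hclosed
  rcases Nat.eq_zero_or_pos n with rfl | hn
  · exact dvd_zero h
  by_cases hinj : ∀ i j, i < n → j < n → f i = f j → i = j
  · apply hper
    have : NeZero n := ⟨hn.ne'⟩
    refine ⟨hn, fun i : ZMod n => f i.val, ?_, ?_⟩
    · intro a b hab
      exact ZMod.val_injective n (hinj a.val b.val (ZMod.val_lt a) (ZMod.val_lt b) hab)
    · intro i
      have hv : (i + 1 : ZMod n).val = (i.val + 1) % n := by
        rw [ZMod.val_add, ZMod.val_one_eq_one_mod, Nat.add_mod_mod]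
      by_cases hlt : i.val + 1 < n
      · simp only [hv, Nat.mod_eq_of_lt hlt]
        exact hw i.val (ZMod.val_lt i)
      · have hveq : i.val + 1 = n := by have := ZMod.val_lt i; omega
        simp only [hv, hveq, Nat.mod_self]
        rw [← hclosed]
        have h2 : f n = f (i.val + 1) := by rw [hveq]
        rw [h2]
        exact hw i.val (by omega)
  · push_neg at hinj
    obtain ⟨i, j, hi, hj, hfij, hij⟩ := hinj
    have key : ∀ i j : ℕ, i < j → j < n → f i = f j → h ∣ n := by
      intro i j hlt hjn hfe
      have h1 : h ∣ j - i := by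
        apply ih (j - i) (by omega) (fun k => f (i + k))
        · intro k hk
          show A (f (i + k)) (f (i + (k + 1)))
          have e : i + (k + 1) = (i + k) + 1 := by omega
          rw [e]
          exact hw (i + k) (by omega)
        · show f (i + (j - i)) = f (i + 0)
          have e1 : i + (j - i) = j := by omega
          have e2 : i + 0 = i := by omega
          rw [e1, e2, hfe]
      have h2 : h ∣ n - (j - i) := by
        apply ih (n - (j - i)) (by omega) (fun k => if k ≤ i then f k else f (k + (j - i)))
        · intro k hk
          by_cases hk1 : k + 1 ≤ i
          · simp only [if_pos hk1, if_pos (by omega : k ≤ i)]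
            exact hw k (by omega)
          · by_cases hk2 : k ≤ i
            · have hke : k = i := by omega
              simp only [hke, if_pos le_rfl, if_neg (by omega : ¬ i + 1 ≤ i),
                (by omega : i + 1 + (j - i) = j + 1), hfe]
              exact hw j (by omega)
            · simp only [if_neg hk2, if_neg (by omega : ¬ k + 1 ≤ i),
                (by omega : k + 1 + (j - i) = (k + (j - i)) + 1)]
              exact hw (k + (j - i)) (by omega)
        · simp only [if_pos (Nat.zero_le i), if_neg (by omega : ¬ n - (j - i) ≤ i),
            (by omega : n - (j - i) + (j - i) = n)]
          exact hclosed
      have := Nat.dvd_add h1 h2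
      rwa [(by omega : j - i + (n - (j - i)) = n)] at this
    rcases Nat.lt_or_ge i j with hlt | hge
    · exact key i j hlt hj hfij
    · exact key j i (by omega) hi hfij.symm

/-- Every strongly connected digraph with at least two vertices and even
period has an independent dominating set. -/
theorem stmt_6 {V : Type*} [Fintype V] [Nontrivial V] (A : V → V → Prop)
    (hirr : ∀ v : V, ¬ A v v) (hsc : StronglyConnected A)
    (h : ℕ) (hper : IsPeriod A h) (heven : Even h) :
    ∃ S : Set V, IsIDS A S := by
  classical
  obtain ⟨u0, w0, hne⟩ := exists_pair_ne V
  have h2 : (2 : ℕ) ∣ h := heven.two_dvd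
  have hclosed2 : ∀ n (f : ℕ → V), GWalk A f n → f n = f 0 → (n : ZMod 2) = 0 := by
    intro n f hf hc
    have := closed_dvd A h hper.1 n f hf hc
    exact (ZMod.natCast_eq_zero_iff n 2).mpr (h2.trans this)
  have hwalkto : ∀ v, ∃ n, ∃ f : ℕ → V, GWalk A f n ∧ f 0 = u0 ∧ f n = v :=
    fun v => exists_walk A (hsc u0 v)
  set c : V → ZMod 2 := fun v => ((hwalkto v).choose : ZMod 2) with hc
  have hpar : ∀ v (a : ℕ), (∃ f : ℕ → V, GWalk A f a ∧ f 0 = u0 ∧ f a = v) →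
      (a : ZMod 2) = c v := by
    intro v a ha
    obtain ⟨f, hf, hf0, hfa⟩ := ha
    set b := (hwalkto v).choose with hb
    obtain ⟨g, hg, hg0, hgb⟩ := (hwalkto v).choose_spec
    obtain ⟨m, k, hk, hk0, hkm⟩ := exists_walk A (hsc v u0)
    obtain ⟨F, hF, hF0, hFe⟩ := walk_concat A hf hk (by rw [hfa, hk0])
    obtain ⟨G, hG, hG0, hGe⟩ := walk_concat A hg hk (by rw [hgb, hk0])
    have e1 : ((a + m : ℕ) : ZMod 2) = 0 := hclosed2 _ F hF (by rw [hFe, hF0, hkm, hf0])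
    have e2 : ((b + m : ℕ) : ZMod 2) = 0 := hclosed2 _ G hG (by rw [hGe, hG0, hkm, hg0])
    push_cast at e1 e2
    have : (a : ZMod 2) + m = (b : ZMod 2) + m := by rw [e1, e2]
    have h3 := add_right_cancel this
    rw [h3, hc]
  have harc : ∀ u v, A u v → c v = c u + 1 := by
    intro u v huv
    obtain ⟨g, hg, hg0, hga⟩ := (hwalkto u).choose_spec
    set a := (hwalkto u).choose with ha
    have hstep : GWalk A (fun k => if k = 0 then u else v) 1 := by
      intro i hi
      have : i = 0 := by omega
      simp [this]
      exact huv
    obtain ⟨F, hF, hF0, hFe⟩ := walk_concat A hg hstep (by simp [hga])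
    have := hpar v (a + 1) ⟨F, hF, by rw [hF0, hg0], by simpa using hFe⟩
    push_cast at this
    rw [← this]
  refine ⟨{v | c v = 0}, ?_, ?_⟩
  · intro u hu v hv huv
    have := harc u v huv
    rw [Set.mem_setOf_eq.mp hu, Set.mem_setOf_eq.mp hv] at this
    exact absurd this (by decide)
  · intro v hv
    rw [Set.mem_setOf_eq] at hv
    obtain ⟨w, hw'⟩ := exists_ne v
    rcases (hsc w v).cases_tail with heq | ⟨u, _, huv⟩
    · exact absurd heq.symm hw'
    · refine ⟨u, ?_, huv⟩
      have h4 := harc u v huv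
      have key : ∀ x y : ZMod 2, x ≠ 0 → x = y + 1 → y = 0 := by decide
      exact key (c v) (c u) hv h4
end

section
/- Every strongly connected digraph with at least two vertices whose period (the greatest common divisor of the lengths of its directed cycles) is even contains two disjoint independent dominating sets; in particular its idomatic number is at least 2. -/

def Wlk {V : Type*} (A : V → V → Prop) (n : ℕ) (u v : V) : Prop :=
  ∃ f : ℕ → V, f 0 = u ∧ f n = v ∧ ∀ i < n, A (f i) (f (i+1))

lemma wlk_refl {V : Type*} (A : V → V → Prop) (v : V) : Wlk A 0 v v :=
  ⟨fun _ => v, rfl, rfl, fun i hi => by omega⟩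

lemma wlk_single {V : Type*} {A : V → V → Prop} {u v : V} (hab : A u v) : Wlk A 1 u v :=
  ⟨fun k => if k = 0 then u else v, by simp, by simp, fun i hi => by
    simp only [show i = 0 by omega]
    simpa using hab⟩

lemma wlk_concat {V : Type*} {A : V → V → Prop} {n m : ℕ} {u v w : V}
    (h1 : Wlk A n u v) (h2 : Wlk A m v w) : Wlk A (n + m) u w := by
  obtain ⟨f, hf0, hfn, hfa⟩ := h1
  obtain ⟨g, hg0, hgm, hga⟩ := h2
  refine ⟨fun k => if k ≤ n then f k else g (k - n), by simp [hf0], ?_, ?_⟩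
  · by_cases hm : m = 0
    · simp [hm, hfn, ← hg0, ← hgm, hm]
    · have : ¬ (n + m ≤ n) := by omega
      simp only [this, if_false]
      rw [show n + m - n = m by omega, hgm]
  · intro i hi
    rcases lt_trichotomy i n with hlt | heq | hgt
    · have h1' : i ≤ n := by omega
      have h2' : i + 1 ≤ n := by omega
      simpa [h1', h2'] using hfa i hlt
    · subst heq
      have hm : 0 < m := by omega
      have h2' : ¬ (i + 1 ≤ i) := by omega
      simp only [le_refl, if_true, h2', if_false, show i + 1 - i = 1 by omega]
      rw [hfn, ← hg0]
      exact hga 0 hm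
    · have h1' : ¬ (i ≤ n) := by omega
      have h2' : ¬ (i + 1 ≤ n) := by omega
      simp only [h1', h2', if_false, show i + 1 - n = (i - n) + 1 by omega]
      exact hga (i - n) (by omega)

lemma wlk_of_rtg {V : Type*} {A : V → V → Prop} {u v : V}
    (h : Relation.ReflTransGen A u v) : ∃ n, Wlk A n u v := by
  induction h with
  | refl => exact ⟨0, wlk_refl A u⟩
  | tail _ hab ih =>
      obtain ⟨n, hn⟩ := ih
      exact ⟨n + 1, wlk_concat hn (wlk_single hab)⟩

lemma closed_walk_dvd {V : Type*} {A : V → V → Prop} {h : ℕ}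
    (hper : ∀ n, HasCycleLength A n → h ∣ n) :
    ∀ n v, Wlk A n v v → h ∣ n := by
  intro n
  induction n using Nat.strong_induction_on with
  | _ n ih =>
    intro v hw
    rcases Nat.eq_zero_or_pos n with h0 | hpos
    · simp [h0]
    obtain ⟨f, hf0, hfn, hfa⟩ := hw
    by_cases hrep : ∃ i j, i < j ∧ j < n ∧ f i = f j
    · obtain ⟨i, j, hij, hjn, hfij⟩ := hrep
      have hw1 : Wlk A (j - i) (f i) (f i) := by
        refine ⟨fun k => f (i + k), by simp, ?_, ?_⟩
        · show f (i + (j - i)) = f i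
          rw [show i + (j - i) = j by omega, hfij]
        · intro k hk
          show A (f (i + k)) (f (i + (k + 1)))
          rw [show i + (k + 1) = i + k + 1 by omega]
          exact hfa (i + k) (by omega)
      have hw2 : Wlk A (i + (n - j)) v v := by
        refine wlk_concat (n := i) (m := n - j) (v := f i)
          ⟨f, hf0, rfl, fun k hk => hfa k (by omega)⟩ ?_
        refine ⟨fun k => f (j + k), by simp [hfij], ?_, ?_⟩
        · show f (j + (n - j)) = v
          rw [show j + (n - j) = n by omega, hfn]
        · intro k hk
          show A (f (j + k)) (f (j + (k + 1)))
          rw [show j + (k + 1) = j + k + 1 by omega]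
          exact hfa (j + k) (by omega)
      have d1 := ih (j - i) (by omega) (f i) hw1
      have d2 := ih (i + (n - j)) (by omega) v hw2
      have heq : n = (j - i) + (i + (n - j)) := by omega
      rw [heq]
      exact Nat.dvd_add d1 d2
    · push_neg at hrep
      have hinj : ∀ i j, i < n → j < n → f i = f j → i = j := by
        intro i j hi hj hfij
        rcases lt_trichotomy i j with hlt | heq | hgt
        · exact absurd hfij (hrep i j hlt hj)
        · exact heq
        · exact absurd hfij.symm (hrep j i hgt hi)
      haveI : NeZero n := ⟨by omega⟩
      refine hper n ⟨hpos, fun i => f i.val, ?_, ?_⟩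
      · intro i j hij
        exact ZMod.val_injective n (hinj i.val j.val (ZMod.val_lt i) (ZMod.val_lt j) hij)
      · intro i
        show A (f i.val) (f (i + 1).val)
        rcases Nat.lt_or_ge 1 n with h1 | h1
        · haveI : Fact (1 < n) := ⟨h1⟩
          have hv : (i + 1).val = (i.val + 1) % n := by
            rw [ZMod.val_add, ZMod.val_one]
          by_cases hc : i.val + 1 < n
          · rw [hv, Nat.mod_eq_of_lt hc]
            exact hfa i.val (by omega)
          · have hv' : i.val = n - 1 := by have := ZMod.val_lt i; omega
            have h2 : (i + 1).val = 0 := by rw [hv, hv', show n - 1 + 1 = n by omega, Nat.mod_self]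
            rw [hv', h2, hf0, ← hfn]
            have := hfa (n - 1) (by omega)
            rwa [show n - 1 + 1 = n by omega] at this
        · have hn1 : n = 1 := by omega
          subst hn1
          have h0 : ∀ j : ZMod 1, j.val = 0 := by decide
          rw [h0, h0, hf0]
          have := hfa 0 (by omega)
          rwa [hf0, show (0 + 1 : ℕ) = 1 from rfl, hfn] at this

/-- Every strongly connected digraph with at least two vertices and even
period contains two disjoint independent dominating sets (idomatic number ≥ 2). -/
theorem stmt_7 {V : Type*} [Fintype V] [Nontrivial V] (A : V → V → Prop)
    (hirr : ∀ v : V, ¬ A v v) (hsc : StronglyConnected A)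
    (h : ℕ) (hper : IsPeriod A h) (heven : Even h) :
    ∃ S T : Set V, IsIDS A S ∧ IsIDS A T ∧ Disjoint S T := by
  classical
  have hall : ∀ u v : V, ∃ n, Wlk A n u v := fun u v => wlk_of_rtg (hsc u v)
  obtain ⟨v0⟩ : Nonempty V := inferInstance
  set c : V → ZMod h := fun v => ((hall v0 v).choose : ZMod h) with hc
  have hdvd := closed_walk_dvd hper.1
  have key : ∀ m (u v : V), Wlk A m u v → c v = c u + m := by
    intro m u v hm
    obtain ⟨d, hd⟩ := hall v v0
    have ha := (hall v0 u).choose_spec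
    have hb := (hall v0 v).choose_spec
    have h1 : h ∣ (hall v0 u).choose + m + d :=
      hdvd _ _ (wlk_concat (wlk_concat ha hm) hd)
    have h2 : h ∣ (hall v0 v).choose + d := hdvd _ _ (wlk_concat hb hd)
    have e1 : (((hall v0 u).choose + m + d : ℕ) : ZMod h) = 0 :=
      (CharP.cast_eq_zero_iff (ZMod h) h _).mpr h1
    have e2 : (((hall v0 v).choose + d : ℕ) : ZMod h) = 0 :=
      (CharP.cast_eq_zero_iff (ZMod h) h _).mpr h2
    push_cast at e1 e2
    show ((hall v0 v).choose : ZMod h) = ((hall v0 u).choose : ZMod h) + m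
    linear_combination e2 - e1
  have harc : ∀ u v, A u v → c v = c u + 1 := by
    intro u v huv
    have := key 1 u v (wlk_single huv)
    simpa using this
  have h2dvd : (2 : ℕ) ∣ h := heven.two_dvd
  set p : V → ZMod 2 := fun v => ZMod.castHom h2dvd (ZMod 2) (c v) with hp
  have parc : ∀ u v, A u v → p v = p u + 1 := by
    intro u v huv
    show ZMod.castHom h2dvd (ZMod 2) (c v) = ZMod.castHom h2dvd (ZMod 2) (c u) + 1
    rw [harc u v huv, map_add, map_one]
  have hin : ∀ v : V, ∃ u, A u v := by
    intro v
    obtain ⟨w, hw⟩ := exists_ne v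
    obtain ⟨m, f, hf0, hfm, hfa⟩ := hall w v
    have hm : m ≠ 0 := by
      rintro rfl
      exact hw (hf0 ▸ hfm)
    refine ⟨f (m - 1), ?_⟩
    have := hfa (m - 1) (by omega)
    rwa [show m - 1 + 1 = m by omega, hfm] at this
  have h01 : ∀ x : ZMod 2, x = 0 ∨ x = 1 := by decide
  have hne : ∀ x : ZMod 2, x ≠ x + 1 := by decide
  have hids : ∀ a : ZMod 2, IsIDS A {v | p v = a} := by
    intro a
    constructor
    · intro u hu v hv huv
      simp only [Set.mem_setOf_eq] at hu hv
      have := parc u v huv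
      rw [hu, hv] at this
      exact hne a this
    · intro v hv
      simp only [Set.mem_setOf_eq] at hv
      obtain ⟨u, hu⟩ := hin v
      refine ⟨u, ?_, hu⟩
      have hpv := parc u v hu
      simp only [Set.mem_setOf_eq]
      by_cases hpu : p u = a
      · exact hpu
      · exfalso
        apply hv
        have hne2 : ∀ x y : ZMod 2, x ≠ y → x = y + 1 := by decide
        have hcyc : ∀ y : ZMod 2, y + 1 + 1 = y := by decide
        rw [hpv, hne2 _ _ hpu, hcyc]
  refine ⟨{v | p v = 0}, {v | p v = 1}, hids 0, hids 1, ?_⟩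
  rw [Set.disjoint_left]
  intro v h0 h1
  simp only [Set.mem_setOf_eq] at h0 h1
  rw [h0] at h1
  exact absurd h1 (by decide)
end

section
/- Let D be a strongly connected digraph with at least two vertices and let h > 1 be odd, and suppose V(D) is partitioned into nonempty sets S_1, …, S_h such that every arc (u,v) ∈ A(D) has u ∈ S_i and v ∈ S_{i+1} (indices modulo h) for some i. If some part S_i has exactly one vertex, then D has no independent dominating set. -/
/-- If a strongly connected digraph with at least two vertices is
partitioned into nonempty parts `S 0, …, S (h-1)` (`h > 1` odd) with all arcs going
from a part to the next part (indices modulo `h`), and some part is a singleton, then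
the digraph has no independent dominating set. -/
theorem stmt_11 {V : Type*} [Fintype V] [Nontrivial V] (A : V → V → Prop)
    (hirr : ∀ v : V, ¬ A v v) (hsc : StronglyConnected A)
    (h : ℕ) (h1 : 1 < h) (hodd : Odd h)
    (S : ℕ → Set V)
    (hne : ∀ i < h, (S i).Nonempty)
    (hcover : ∀ v : V, ∃ i < h, v ∈ S i)
    (hdisj : ∀ i < h, ∀ j < h, i ≠ j → Disjoint (S i) (S j))
    (harc : ∀ u v : V, A u v → ∃ i < h, u ∈ S i ∧ v ∈ S ((i + 1) % h))
    (hsing : ∃ i < h, ∃ v : V, S i = {v}) :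
    ¬ ∃ I : Set V, IsIDS A I := by
  rintro ⟨I, hInd, hDom⟩
  obtain ⟨k, hk, w, hSk⟩ := hsing
  have hpos : 0 < h := by omega
  -- each vertex lies in a unique part
  have huniq : ∀ v : V, ∀ i, i < h → ∀ j, j < h → v ∈ S i → v ∈ S j → i = j := by
    intro v i hi j hj hvi hvj
    by_contra hne'
    exact Set.disjoint_left.mp (hdisj i hi j hj hne') hvi hvj
  -- every vertex has an in-neighbor
  have hin : ∀ v : V, ∃ u, A u v := by
    intro v
    obtain ⟨u, hu⟩ := exists_ne v
    rcases (hsc u v).cases_tail with h1 | ⟨c, _, hc⟩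
    · exact absurd h1.symm hu
    · exact ⟨c, hc⟩
  have succ_lt : ∀ i : ℕ, (i + 1) % h < h := fun i => Nat.mod_lt _ hpos
  have succ_inj : ∀ i, i < h → ∀ j, j < h → (i + 1) % h = (j + 1) % h → i = j := by
    intro i hi j hj hij
    by_cases e1 : i + 1 = h
    · by_cases e2 : j + 1 = h
      · omega
      · rw [e1, Nat.mod_self, Nat.mod_eq_of_lt (by omega)] at hij; omega
    · rw [Nat.mod_eq_of_lt (show i + 1 < h by omega)] at hij
      by_cases e2 : j + 1 = h
      · rw [e2, Nat.mod_self] at hij; omega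
      · rw [Nat.mod_eq_of_lt (by omega)] at hij; omega
  -- if a part is fully in I, the next part is disjoint from I
  have step1 : ∀ i, i < h → (∀ x ∈ S i, x ∈ I) → ∀ v ∈ S ((i + 1) % h), v ∉ I := by
    intro i hi hFull v hv hvI
    obtain ⟨u, hu⟩ := hin v
    obtain ⟨j, hj, huj, hvj⟩ := harc u v hu
    have hji : j = i := succ_inj j hj i hi (huniq v _ (succ_lt j) _ (succ_lt i) hvj hv)
    subst hji
    exact hInd u (hFull u huj) v hvI hu
  -- if a part is disjoint from I, the next part is fully in I
  have step2 : ∀ i, i < h → (∀ x ∈ S i, x ∉ I) → ∀ v ∈ S ((i + 1) % h), v ∈ I := by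
    intro i hi hEmpty v hv
    by_contra hvI
    obtain ⟨u, huI, hu⟩ := hDom v hvI
    obtain ⟨j, hj, huj, hvj⟩ := harc u v hu
    have hji : j = i := succ_inj j hj i hi (huniq v _ (succ_lt j) _ (succ_lt i) hvj hv)
    subst hji
    exact hEmpty u huj huI
  -- alternation around the cycle
  have alt : ∀ (P Q : V → Prop),
      (∀ i, i < h → (∀ x ∈ S i, P x) → ∀ v ∈ S ((i + 1) % h), Q v) →
      (∀ i, i < h → (∀ x ∈ S i, Q x) → ∀ v ∈ S ((i + 1) % h), P v) →
      (∀ x ∈ S k, P x) →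
      ∀ m, (Even m → ∀ x ∈ S ((k + m) % h), P x) ∧
           (Odd m → ∀ x ∈ S ((k + m) % h), Q x) := by
    intro P Q s1 s2 base m
    induction m with
    | zero =>
      constructor
      · intro _
        have : (k + 0) % h = k := by rw [Nat.add_zero, Nat.mod_eq_of_lt hk]
        rw [this]; exact base
      · intro ho
        rw [Nat.odd_iff] at ho; omega
    | succ n ih =>
      have hrw : (k + (n + 1)) % h = ((k + n) % h + 1) % h := by
        rw [Nat.mod_add_mod, ← Nat.add_assoc]
      constructor
      · intro he
        have hn : Odd n := by
          rw [Nat.even_iff] at he; rw [Nat.odd_iff]; omega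
        rw [hrw]
        exact s2 _ (Nat.mod_lt _ hpos) (ih.2 hn)
      · intro ho
        have hn : Even n := by
          rw [Nat.odd_iff] at ho; rw [Nat.even_iff]; omega
        rw [hrw]
        exact s1 _ (Nat.mod_lt _ hpos) (ih.1 hn)
  have hkh : (k + h) % h = k := by rw [Nat.add_mod_right, Nat.mod_eq_of_lt hk]
  have hwk : w ∈ S k := by rw [hSk]; rfl
  by_cases hw : w ∈ I
  · have base : ∀ x ∈ S k, x ∈ I := by
      intro x hx; rw [hSk] at hx; rw [hx]; exact hw
    have := (alt (· ∈ I) (· ∉ I) step1 step2 base h).2 hodd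
    rw [hkh] at this
    exact this w hwk hw
  · have base : ∀ x ∈ S k, x ∉ I := by
      intro x hx; rw [hSk] at hx; rw [hx]; exact hw
    have := (alt (· ∉ I) (· ∈ I) step2 step1 base h).2 hodd
    rw [hkh] at this
    exact hw (this w hwk)
end

section
/- Let D be a digraph whose vertex set is partitioned into sets S_0, …, S_{h-1} (h ≥ 1) such that every arc (u,v) ∈ A(D) has u ∈ S_i and v ∈ S_{i+1} (indices modulo h) for some i. Then an independent dominating set of D is entirely determined by its intersection with any one part: if I and J are independent dominating sets of D with I ∩ S_i = J ∩ S_i for some i, then I = J. -/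
/-- If the vertex set is partitioned into parts `S 0, …, S (h-1)` with
all arcs going from a part to the next part (indices modulo `h`), then an independent
dominating set is determined by its intersection with any single part. -/
theorem stmt_12 {V : Type*} [Fintype V] (A : V → V → Prop)
    (hirr : ∀ v : V, ¬ A v v)
    (h : ℕ) (hpos : 1 ≤ h)
    (S : ℕ → Set V)
    (hcover : ∀ v : V, ∃ i < h, v ∈ S i)
    (hdisj : ∀ i < h, ∀ j < h, i ≠ j → Disjoint (S i) (S j))
    (harc : ∀ u v : V, A u v → ∃ i < h, u ∈ S i ∧ v ∈ S ((i + 1) % h))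
    (I J : Set V) (hI : IsIDS A I) (hJ : IsIDS A J)
    (i : ℕ) (hi : i < h) (hIJ : I ∩ S i = J ∩ S i) :
    I = J := by
 -- helper: x ↦ (x+1) % h is injective on [0,h)
  have hinj : ∀ a < h, ∀ b < h, (a + 1) % h = (b + 1) % h → a = b := by
    intro a ha b hb e
    rcases Nat.lt_or_ge (a + 1) h with l | g
    · rw [Nat.mod_eq_of_lt l] at e
      rcases Nat.lt_or_ge (b + 1) h with l2 | g2
      · rw [Nat.mod_eq_of_lt l2] at e; omega
      · have hb1 : b + 1 = h := by omega
        rw [hb1, Nat.mod_self] at e; omega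
    · have ha1 : a + 1 = h := by omega
      rw [ha1, Nat.mod_self] at e
      rcases Nat.lt_or_ge (b + 1) h with l2 | g2
      · rw [Nat.mod_eq_of_lt l2] at e; omega
      · omega
  -- membership in an IDS on the next part is determined by the previous part
  have hmem : ∀ (K : Set V), IsIDS A K → ∀ j, j < h → ∀ v ∈ S ((j + 1) % h),
      (v ∈ K ↔ ¬ ∃ u ∈ K ∩ S j, A u v) := by
    intro K hK j hj v hv
    constructor
    · rintro hvK ⟨u, ⟨huK, _⟩, hA⟩
      exact hK.1 u huK v hvK hA
    · intro hno
      by_contra hvK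
      obtain ⟨u, huK, hA⟩ := hK.2 v hvK
      obtain ⟨i', hi', hu', hv'⟩ := harc u v hA
      have h1 : (i' + 1) % h = (j + 1) % h := by
        by_contra hne
        exact Set.disjoint_left.mp
          (hdisj _ (Nat.mod_lt _ hpos) _ (Nat.mod_lt _ hpos) hne) hv' hv
      have hij : i' = j := hinj _ hi' _ hj h1
      exact hno ⟨u, ⟨huK, hij ▸ hu'⟩, hA⟩
  have key : ∀ k, I ∩ S ((i + k) % h) = J ∩ S ((i + k) % h) := by
    intro k
    induction k with
    | zero => simpa [Nat.mod_eq_of_lt hi] using hIJ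
    | succ k ih =>
      have hjlt : (i + k) % h < h := Nat.mod_lt _ hpos
      have hidx : (i + (k + 1)) % h = ((i + k) % h + 1) % h := by
        rw [Nat.mod_add_mod, Nat.add_assoc]
      ext v
      simp only [Set.mem_inter_iff, hidx]
      constructor
      · rintro ⟨hvI, hvS⟩
        refine ⟨?_, hvS⟩
        rw [hmem J hJ _ hjlt v hvS, ← ih]
        exact ((hmem I hI _ hjlt v hvS).mp hvI)
      · rintro ⟨hvJ, hvS⟩
        refine ⟨?_, hvS⟩
        rw [hmem I hI _ hjlt v hvS, ih]
        exact ((hmem J hJ _ hjlt v hvS).mp hvJ)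
  ext v
  obtain ⟨j, hj, hvS⟩ := hcover v
  have hk : (i + (j + h - i) % h) % h = j := by
    rw [Nat.add_mod_mod]
    have : i + (j + h - i) = j + h := by omega
    rw [this, Nat.add_mod_right, Nat.mod_eq_of_lt hj]
  have := key ((j + h - i) % h)
  rw [hk] at this
  constructor
  · intro hvI
    exact (Set.ext_iff.mp this v).mp ⟨hvI, hvS⟩ |>.1
  · intro hvJ
    exact (Set.ext_iff.mp this v).mpr ⟨hvJ, hvS⟩ |>.1
end

section
/- For every odd n ≥ 3, the Cartesian product C_n □ C_n of the directed n-cycle with itself contains an independent dominating set (even though C_n itself has none). -/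
/-- For every odd `n ≥ 3`, the Cartesian product `C_n □ C_n` contains an
independent dominating set. -/
theorem stmt_13 (n : ℕ) (hn : 3 ≤ n) (hodd : Odd n) :
    ∃ S : Set (ZMod n × ZMod n), IsIDS (cartArc (cycArc n) (cycArc n)) S := by
  haveI : NeZero n := ⟨by omega⟩
  haveI : Fact (1 < n) := ⟨by omega⟩
  obtain ⟨m, hm⟩ := hodd
  set P : ZMod n → Prop := fun x => x.val % 2 = 0 ∧ x.val ≠ n - 1 with hP
  have hvlt : ∀ x : ZMod n, x.val < n := fun x => ZMod.val_lt x
  have hadd : ∀ x : ZMod n, (x + 1).val = (x.val + 1) % n := by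
    intro x; rw [ZMod.val_add, ZMod.val_one]
  have hneg : ((n - 1 : ℕ) : ZMod n) = -1 := by
    have h := ZMod.natCast_self n
    have h2 : ((n - 1 : ℕ) : ZMod n) + 1 = ((n : ℕ) : ZMod n) := by
      rw [← Nat.cast_add_one]; congr 1; omega
    rw [h] at h2
    linear_combination h2
  have hsub : ∀ x : ZMod n, (x - 1).val = (x.val + (n - 1)) % n := by
    intro x
    have e : x - 1 = x + ((n - 1 : ℕ) : ZMod n) := by rw [hneg]; ring
    rw [e, ZMod.val_add, ZMod.val_natCast, Nat.mod_eq_of_lt (show n - 1 < n by omega)]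
  -- Lemma A: no two consecutive diagonal values are both in the pattern
  have lemA : ∀ x : ZMod n, P x → ¬ P (x + 1) := by
    intro x ⟨he, hne⟩ ⟨he', _⟩
    rw [hadd] at he'
    have hx := hvlt x
    have : x.val + 1 < n := by omega
    rw [Nat.mod_eq_of_lt this] at he'
    omega
  have lemB : ∀ x : ZMod n, P x → ¬ P (x - 1) := by
    intro x ⟨he, hne⟩ ⟨he', hne'⟩
    rw [hsub] at he' hne'
    have hx := hvlt x
    rcases Nat.eq_zero_or_pos x.val with h0 | h0
    · have hlt : n - 1 < n := by omega
      rw [h0, Nat.zero_add, Nat.mod_eq_of_lt hlt] at hne'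
      exact hne' rfl
    · have e : x.val + (n - 1) = (x.val - 1) + n := by omega
      have hlt : x.val - 1 < n := by omega
      rw [e, Nat.add_mod_right, Nat.mod_eq_of_lt hlt] at he'
      omega
  have lemC : ∀ x : ZMod n, ¬ P x → P (x + 1) ∨ P (x - 1) := by
    intro x hx
    have hv := hvlt x
    rcases Nat.mod_two_eq_zero_or_one x.val with h | h
    · have hne : x.val = n - 1 := by
        by_contra hc
        exact hx ⟨h, hc⟩
      left
      have e1 : n - 1 + 1 = n := by omega
      constructor
      · rw [hadd, hne, e1, Nat.mod_self]
      · rw [hadd, hne, e1, Nat.mod_self]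
        omega
    · right
      have h1 : 1 ≤ x.val := by omega
      have e : x.val + (n - 1) = (x.val - 1) + n := by omega
      have hlt : x.val - 1 < n := by omega
      constructor
      · rw [hsub, e, Nat.add_mod_right, Nat.mod_eq_of_lt hlt]
        omega
      · rw [hsub, e, Nat.add_mod_right, Nat.mod_eq_of_lt hlt]
        omega
  refine ⟨{p | P (p.1 - p.2)}, ?_, ?_⟩
  · rintro u hu v hv (⟨h1, h2⟩ | ⟨h1, h2⟩)
    · -- v.1 = u.1 + 1, u.2 = v.2
      have : v.1 - v.2 = (u.1 - u.2) + 1 := by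
        rw [cycArc] at h1
        rw [h1, ← h2]; ring
      exact lemA _ hu (by rwa [← this])
    · -- v.2 = u.2 + 1, u.1 = v.1
      have : v.1 - v.2 = (u.1 - u.2) - 1 := by
        rw [cycArc] at h1
        rw [h1, ← h2]; ring
      exact lemB _ hu (by rwa [← this])
  · intro v hv
    rcases lemC (v.1 - v.2) hv with h | h
    · refine ⟨(v.1, v.2 - 1), ?_, Or.inr ⟨?_, rfl⟩⟩
      · show P (v.1 - (v.2 - 1))
        have : v.1 - (v.2 - 1) = (v.1 - v.2) + 1 := by ring
        rwa [this]
      · show v.2 = (v.2 - 1) + 1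
        ring
    · refine ⟨(v.1 - 1, v.2), ?_, Or.inl ⟨?_, rfl⟩⟩
      · show P ((v.1 - 1) - v.2)
        have : (v.1 - 1) - v.2 = (v.1 - v.2) - 1 := by ring
        rwa [this]
      · show v.1 = (v.1 - 1) + 1
        ring
end

section
/- For every odd n ≥ 3, the Cartesian product W_n' □ P' has no independent dominating set, where W_n' is the directed wheel on n+1 vertices (a center vertex c with arcs (c, v_i) for all 0 ≤ i ≤ n-1, together with the directed outer cycle arcs (v_i, v_{i+1 mod n})) and P' is the oriented paw on vertices {a, b_1, b_2, b_3} with arcs (a, b_3), (b_1, b_2), (b_2, b_3), (b_3, b_1). -/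
lemma arc_center {n : ℕ} (i : ZMod n) (p : Fin 4) :
    cartArc (wheelArc n) pawArc (none, p) (some i, p) :=
  Or.inl ⟨Or.inl ⟨rfl, i, rfl⟩, rfl⟩

lemma arc_cyc {n : ℕ} (i : ZMod n) (p : Fin 4) :
    cartArc (wheelArc n) pawArc (some i, p) (some (i + 1), p) :=
  Or.inl ⟨Or.inr ⟨i, rfl, rfl⟩, rfl⟩

lemma arc_paw {n : ℕ} (x : Option (ZMod n)) {p q : Fin 4} (h : pawArc p q) :
    cartArc (wheelArc n) pawArc (x, p) (x, q) :=
  Or.inr ⟨h, rfl⟩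

theorem stmt_14' (n : ℕ) (hn : 3 ≤ n) (hodd : Odd n) :
    ¬ ∃ S : Set (Option (ZMod n) × Fin 4), IsIDS (cartArc (wheelArc n) pawArc) S := by
  haveI : NeZero n := ⟨by omega⟩
  rintro ⟨S, hInd, hDom⟩
  -- (c,0) ∈ S: it has no in-neighbor at all
  have hc0 : ((none : Option (ZMod n)), (0 : Fin 4)) ∈ S := by
    by_contra h
    obtain ⟨⟨x, p⟩, hu, harc⟩ := hDom _ h
    rcases harc with ⟨hw, -⟩ | ⟨hp, -⟩
    · rcases hw with ⟨-, i, hi⟩ | ⟨i, -, hi⟩ <;> simp at hi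
    · rcases hp with ⟨-, h⟩ | ⟨-, h⟩ | ⟨-, h⟩ | ⟨-, h⟩ <;> simp at h
  -- (c,3) ∉ S
  have hc3 : ((none : Option (ZMod n)), (3 : Fin 4)) ∉ S := fun h =>
    hInd _ hc0 _ h (arc_paw _ (Or.inl ⟨rfl, rfl⟩))
  -- (c,1) ∈ S
  have hc1 : ((none : Option (ZMod n)), (1 : Fin 4)) ∈ S := by
    by_contra h
    obtain ⟨⟨x, p⟩, hu, harc⟩ := hDom _ h
    rcases harc with ⟨hw, -⟩ | ⟨hp, hx⟩
    · rcases hw with ⟨-, i, hi⟩ | ⟨i, -, hi⟩ <;> simp at hi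
    · rcases hp with ⟨h1, h2⟩ | ⟨h1, h2⟩ | ⟨h1, h2⟩ | ⟨h1, h2⟩ <;> simp at h1 h2 ⊢
      · subst h1; simp only at hx; subst hx; exact hc3 hu
  -- (c,2) ∉ S
  have hc2 : ((none : Option (ZMod n)), (2 : Fin 4)) ∉ S := fun h =>
    hInd _ hc1 _ h (arc_paw _ (Or.inr (Or.inl ⟨rfl, rfl⟩)))
  -- no cycle vertex with paw value 0 or 1
  have hv0 : ∀ i : ZMod n, (some i, (0 : Fin 4)) ∉ S := fun i h =>
    hInd _ hc0 _ h (arc_center i 0)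
  have hv1 : ∀ i : ZMod n, (some i, (1 : Fin 4)) ∉ S := fun i h =>
    hInd _ hc1 _ h (arc_center i 1)
  set P : ZMod n → Prop := fun i => (some i, (2 : Fin 4)) ∈ S with hP
  -- no two consecutive 2's
  have nopair : ∀ i : ZMod n, ¬ (P i ∧ P (i + 1)) := fun i ⟨h1, h2⟩ =>
    hInd _ h1 _ h2 (arc_cyc i 2)
  -- coverage for paw value 2
  have cover : ∀ i : ZMod n, P i ∨ P (i - 1) := by
    intro i
    by_cases h : P i
    · exact Or.inl h
    obtain ⟨⟨x, p⟩, hu, harc⟩ := hDom _ h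
    rcases harc with ⟨hw, hp2⟩ | ⟨hp, hx⟩
    · simp only at hp2; subst hp2
      rcases hw with ⟨hx, -⟩ | ⟨j, hx, hj⟩
      · subst hx; exact absurd hu hc2
      · subst hx
        have hji : j = i - 1 := by
          have : some i = some (j + 1) := hj
          have h2 : i = j + 1 := by simpa using this
          rw [h2]; ring
        exact Or.inr (hji ▸ hu)
    · simp only at hx; subst hx
      rcases hp with ⟨h1, h2⟩ | ⟨h1, h2⟩ | ⟨h1, h2⟩ | ⟨h1, h2⟩ <;> simp at h2 <;> try exact h2.elim
      · subst h1; exact absurd hu (hv1 i)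
  -- alternation
  have alt : ∀ i : ZMod n, P i ↔ ¬ P (i + 1) := by
    intro i
    constructor
    · exact fun h hp => nopair i ⟨h, hp⟩
    · intro h
      rcases cover (i + 1) with h' | h'
      · exact absurd h' h
      · simpa using h'
  have step : ∀ i : ZMod n, P i ↔ P (i + 2) := by
    intro i
    have h1 := alt i
    have h2 := alt (i + 1)
    have e : i + 1 + 1 = i + 2 := by ring
    rw [e] at h2
    tauto
  have iter : ∀ (k : ℕ) (i : ZMod n), P i ↔ P (i + (2 * k : ℕ)) := by
    intro k
    induction k with
    | zero => simp
    | succ k ih =>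
      intro i
      have e : i + ((2 * (k + 1) : ℕ) : ZMod n) = (i + 2) + ((2 * k : ℕ) : ZMod n) := by
        push_cast; ring
      rw [e]
      exact (step i).trans (ih (i + 2))
  obtain ⟨m, hm⟩ := hodd
  have h2k : (2 * ((n + 1) / 2) : ℕ) = n + 1 := by omega
  have key := iter ((n + 1) / 2) 0
  rw [h2k] at key
  have e1 : ((0 : ZMod n) + ((n + 1 : ℕ) : ZMod n)) = 1 := by
    push_cast
    simp [ZMod.natCast_self]
  rw [e1] at key
  have := alt 0
  simp only [zero_add] at this
  tauto

/-- For every odd `n ≥ 3`, the Cartesian product `W_n' □ P'` of the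
directed wheel with the oriented paw has no independent dominating set. -/
theorem stmt_14 (n : ℕ) (hn : 3 ≤ n) (hodd : Odd n) :
    ¬ ∃ S : Set (Option (ZMod n) × Fin 4), IsIDS (cartArc (wheelArc n) pawArc) S :=
  stmt_14' n hn hodd
end

section
/- For every odd integer h > 1 and every N, there exists a strongly connected digraph D with more than N vertices whose period (the greatest common divisor of the lengths of its directed cycles) equals h and which has no independent dominating set. -/
/-- A 2-periodic predicate on `ZMod h` shifted by any multiple of 2. -/
lemma two_periodic {h : ℕ} (P : ZMod h → Prop) (hp : ∀ i, P i ↔ P (i + 2)) :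
    ∀ (k : ℕ) (i : ZMod h), P i ↔ P (i + (2 * k : ℕ)) := by
  intro k
  induction k with
  | zero => simp
  | succ n ih =>
    intro i
    have h1 := ih i
    have h2 := hp (i + (2 * n : ℕ))
    have : i + (2 * (n + 1) : ℕ) = i + (2 * n : ℕ) + 2 := by push_cast; ring
    rw [this]
    tauto

/-- For every odd `h > 1` and every `N`, there is a strongly connected
digraph on more than `N` vertices with period `h` and no independent dominating set. -/
theorem stmt_16 (h : ℕ) (h1 : 1 < h) (hodd : Odd h) (N : ℕ) :
    ∃ (V : Type) (inst : Fintype V) (A : V → V → Prop),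
      (∀ v : V, ¬ A v v) ∧ N < @Fintype.card V inst ∧
      StronglyConnected A ∧ IsPeriod A h ∧ ¬ ∃ S : Set V, IsIDS A S := by
  haveI : NeZero h := ⟨by omega⟩
  haveI : Fact (1 < h) := ⟨h1⟩
  refine ⟨ZMod h × Fin (N + 1), inferInstance,
    fun p q => q.1 = p.1 + 1, ?_, ?_, ?_, ⟨?_, ?_⟩, ?_⟩
  · -- irreflexive
    rintro ⟨i, a⟩ hv
    simp only at hv
    exact one_ne_zero (left_eq_add.mp hv)
  · -- cardinality
    rw [Fintype.card_prod, ZMod.card, Fintype.card_fin]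
    nlinarith
  · -- strongly connected
    have walk : ∀ (k : ℕ) (p : ZMod h × Fin (N + 1)) (b : Fin (N + 1)),
        Relation.ReflTransGen (fun p q => q.1 = p.1 + 1) p (p.1 + (k : ZMod h) + 1, b) := by
      intro k
      induction k with
      | zero => intro p b; exact Relation.ReflTransGen.single (by simp)
      | succ n ih =>
        intro p b
        refine Relation.ReflTransGen.tail (ih p 0) ?_
        show (p.1 + ((n + 1 : ℕ) : ZMod h) + 1) = (p.1 + (n : ZMod h) + 1) + 1
        push_cast; ring
    intro u v
    have hk : (((v.1 - u.1 - 1).val : ℕ) : ZMod h) = v.1 - u.1 - 1 := by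
      simp [ZMod.natCast_val, ZMod.cast_id]
    have hv : (u.1 + (((v.1 - u.1 - 1).val : ℕ) : ZMod h) + 1, v.2) = v := by
      rw [hk]
      exact Prod.ext (by ring) rfl
    have := walk (v.1 - u.1 - 1).val u v.2
    rwa [hv] at this
  · -- every cycle length divisible by h
    rintro n ⟨hn, f, hinj, harc⟩
    have key : ∀ k : ℕ, (f (k : ZMod n)).1 = (f 0).1 + (k : ZMod h) := by
      intro k
      induction k with
      | zero => simp
      | succ m ih =>
        have h2 := harc (m : ZMod n)
        have e : ((m + 1 : ℕ) : ZMod n) = (m : ZMod n) + 1 := by push_cast; ring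
        rw [e, h2, ih]
        push_cast; ring
    have := key n
    rw [ZMod.natCast_self] at this
    have hz : ((n : ℕ) : ZMod h) = 0 := left_eq_add.mp this
    exact (ZMod.natCast_eq_zero_iff n h).mp hz
  · -- h divides the period: exhibit a cycle of length h
    intro d hd
    refine hd h ⟨by omega, fun i => (i, 0), ?_, fun i => rfl⟩
    intro a b hab
    exact congrArg Prod.fst hab
  · -- no IDS
    rintro ⟨S, hind, hdom⟩
    set P : ZMod h → Prop := fun i => ∃ a : Fin (N + 1), (i, a) ∈ S with hP
    have indep : ∀ i, P i → ¬ P (i + 1) := by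
      rintro i ⟨a, ha⟩ ⟨b, hb⟩
      exact hind _ ha _ hb rfl
    have dom : ∀ i, ¬ P (i + 1) → P i := by
      intro i hnp
      have hns : ((i + 1 : ZMod h), (0 : Fin (N + 1))) ∉ S := fun hs => hnp ⟨0, hs⟩
      obtain ⟨u, hu, hau⟩ := hdom _ hns
      have : u.1 = i := by
        have : i + 1 = u.1 + 1 := hau
        exact (add_right_cancel this).symm
      refine ⟨u.2, ?_⟩
      rw [← this]
      exact hu
    have iff1 : ∀ i, P i ↔ ¬ P (i + 1) := fun i =>
      ⟨indep i, fun hn => dom i hn⟩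
    have iff2 : ∀ i, P i ↔ P (i + 2) := by
      intro i
      have a1 := iff1 i
      have a2 := iff1 (i + 1)
      have e : i + 1 + 1 = i + 2 := by ring
      rw [e] at a2
      tauto
    obtain ⟨m, hm⟩ := hodd
    have key := two_periodic P iff2 (m + 1) 0
    have e : ((2 * (m + 1) : ℕ) : ZMod h) = 1 := by
      have : (2 * (m + 1) : ℕ) = h + 1 := by omega
      rw [this]; push_cast; simp
    rw [e] at key
    have a1 := iff1 0
    simp only [zero_add] at key a1
    tauto
end

section
/- For every odd integer h > 1 and every N, there exists a strongly connected digraph D with more than N vertices whose period (the greatest common divisor of the lengths of its directed cycles) equals h and which contains an independent dominating set. -/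
/-- For every odd `h > 1` and every `N`, there is a strongly connected
digraph on more than `N` vertices with period `h` that contains an independent
dominating set. -/
theorem stmt_17 (h : ℕ) (h1 : 1 < h) (hodd : Odd h) (N : ℕ) :
    ∃ (V : Type) (inst : Fintype V) (A : V → V → Prop),
      (∀ v : V, ¬ A v v) ∧ N < @Fintype.card V inst ∧
      StronglyConnected A ∧ IsPeriod A h ∧ ∃ S : Set V, IsIDS A S := by
  haveI : Fact (1 < h) := ⟨h1⟩
  haveI : NeZero h := ⟨by omega⟩
  have hf : (1 : Fin (N + 2)) ≠ 0 := by
    simp [Fin.ext_iff]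
  set V := ZMod h × Fin (N + 2) with hV
  set A : V → V → Prop := fun u v => v.1 = u.1 + 1 ∧ ¬(u.2 = 0 ∧ v.2 = 0) with hA
  have hcyc : HasCycleLength A h := by
    refine ⟨by omega, fun i => (i, 1), ?_, ?_⟩
    · intro i j hij
      exact congrArg Prod.fst hij
    · intro i
      exact ⟨rfl, by simp [hf]⟩
  refine ⟨V, inferInstance, A, ?_, ?_, ?_, ⟨?_, ?_⟩, ?_⟩
  · rintro ⟨i, a⟩ ⟨hi, -⟩
    exact one_ne_zero (left_eq_add.mp hi)
  · rw [Fintype.card_prod, ZMod.card, Fintype.card_fin]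
    nlinarith
  · -- strong connectivity
    have step : ∀ (i : ZMod h) (a b : Fin (N + 2)), b ≠ 0 → A (i, a) (i + 1, b) := by
      intro i a b hb
      exact ⟨rfl, fun hab => hb hab.2⟩
    have reach : ∀ (k : ℕ) (i : ZMod h) (a : Fin (N + 2)),
        Relation.ReflTransGen A (i, a) (i + (k : ZMod h) + 1, (1 : Fin (N + 2))) := by
      intro k
      induction k with
      | zero => intro i a; simpa using Relation.ReflTransGen.single (step i a 1 hf)
      | succ k ih =>
          intro i a
          have : (i + ((k : ℕ) : ZMod h) + 1) + 1 = i + (((k + 1 : ℕ) : ZMod h)) + 1 := by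
            push_cast; ring
          exact this ▸ (ih i a).tail (step _ _ 1 hf)
    rintro ⟨i, a⟩ ⟨j, b⟩
    have hk : i + (((j - i - 2 : ZMod h).val : ℕ) : ZMod h) + 1 = j - 1 := by
      rw [ZMod.natCast_val, ZMod.cast_id]; ring
    have p1 := reach (j - i - 2 : ZMod h).val i a
    rw [hk] at p1
    refine p1.tail ⟨by ring, fun hab => hf hab.1⟩
  · -- h divides all cycle lengths
    rintro n ⟨hn, f, hinj, harc⟩
    have key : ∀ k : ℕ, (f ((k : ℕ) : ZMod n)).1 = (f 0).1 + ((k : ℕ) : ZMod h) := by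
      intro k
      induction k with
      | zero => simp
      | succ k ih =>
          have h2 := (harc ((k : ℕ) : ZMod n)).1
          have h3 : (((k + 1 : ℕ)) : ZMod n) = ((k : ℕ) : ZMod n) + 1 := by push_cast; ring
          rw [h3, h2, ih]; push_cast; ring
    have := key n
    rw [ZMod.natCast_self] at this
    have hz : ((n : ℕ) : ZMod h) = 0 := by
      have := this.symm
      rwa [add_eq_left] at this
    exact (ZMod.natCast_eq_zero_iff n h).mp hz
  · intro d hd
    exact hd h hcyc
  · refine ⟨{p : V | p.2 = 0}, ?_, ?_⟩
    · rintro ⟨i, a⟩ ha ⟨j, b⟩ hb ⟨-, hne⟩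
      exact hne ⟨ha, hb⟩
    · rintro ⟨i, a⟩ ha
      exact ⟨(i - 1, 0), rfl, by ring, fun hab => ha hab.2⟩
end

section
/- Let D be a digraph and let v be a source of D (a vertex with in-degree 0). Then D has an independent dominating set if and only if the induced subdigraph on V(D) \ N⁺[{v}] has an independent dominating set. -/
/-- If `v` is a source of `D`, then `D` has an independent dominating set
iff the subdigraph induced on `V(D) \ N⁺[{v}]` has an independent dominating set. -/
theorem stmt_18 {V : Type*} [Fintype V] (A : V → V → Prop)
    (hirr : ∀ v : V, ¬ A v v)
    (v : V) (hsrc : ∀ u : V, ¬ A u v) :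
    (∃ S : Set V, IsIDS A S) ↔
      ∃ I : Set V, IsIDSOn A (Set.univ \ NplusClosed A {v}) I := by
  constructor
  · rintro ⟨S, hind, hdom⟩
    have hvS : v ∈ S := by
      by_contra hv
      obtain ⟨u, hu, hA⟩ := hdom v hv
      exact hsrc u hA
    refine ⟨S \ {v}, ?_, ?_, ?_⟩
    · rintro w ⟨hwS, hwv⟩
      refine ⟨Set.mem_univ _, ?_⟩
      rintro (h | ⟨u, hu, hA⟩)
      · exact hwv h
      · rcases hu with rfl
        exact hind u hvS w hwS hA
    · intro a ha b hb
      exact hind a ha.1 b hb.1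
    · rintro w ⟨-, hw⟩ hwI
      have hwv : w ≠ v := fun h => hw (Or.inl h)
      have hwS : w ∉ S := fun h => hwI ⟨h, hwv⟩
      obtain ⟨u, hu, hA⟩ := hdom w hwS
      refine ⟨u, ⟨hu, ?_⟩, hA⟩
      rintro rfl
      exact hw (Or.inr ⟨u, rfl, hA⟩)
  · rintro ⟨I, hIW, hind, hdom⟩
    refine ⟨insert v I, ?_, ?_⟩
    · intro a ha b hb hA
      rcases Set.mem_insert_iff.mp ha with ha' | ha' <;>
        rcases Set.mem_insert_iff.mp hb with hb' | hb'
      · subst ha'; subst hb'; exact hirr _ hA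
      · subst ha'; exact (hIW hb').2 (Or.inr ⟨_, rfl, hA⟩)
      · subst hb'; exact hsrc a hA
      · exact hind a ha' b hb' hA
    · intro w hw
      have hwv : w ≠ v := fun h => hw (h ▸ Set.mem_insert v I)
      by_cases hwN : w ∈ NplusClosed A {v}
      · rcases hwN with h | ⟨u, hu, hA⟩
        · exact absurd h hwv
        · rcases hu with rfl
          exact ⟨u, Set.mem_insert u I, hA⟩
      · obtain ⟨u, hu, hA⟩ := hdom w ⟨Set.mem_univ _, hwN⟩
          (fun h => hw (Set.mem_insert_of_mem _ h))
        exact ⟨u, Set.mem_insert_of_mem _ hu, hA⟩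
end
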